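/- arXiv:2003.02189 — 4 statements merged into one kernel-verified Lean document; each statement's English description precedes it below -/
import Mathlib

section
/- Fundamental inequality of Online Mirror Descent on the simplex with KL divergence: Let g_1, ..., g_K ∈ R^d with g_{k,i} ≥ 0 for all k, i, let x_1 = (1/d, ..., 1/d) be the uniform distribution, and let x_{k+1} = argmin_{x ∈ Δ_d} { t ⟨g_k, x − x_k⟩ + KL(x ‖ x_k) } with step size t > 0. Then for any u ∈ Δ_d: Σ_{k=1}^K ⟨g_k, x_k − u⟩ ≤ (log d)/t + (t/2) Σ_{k=1}^K Σ_{i=1}^d x_{k,i} g_{k,i}². -/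
/-! The Hedge weights stay in the open simplex, and the cross-entropy `Φ_k = Σ_i u_i log x_{k,i}`
changes in one step by exactly `-t ⟨g_k, u⟩ - log Z_k`, where `Z_k = Σ_i x_{k,i} e^{-t g_{k,i}}` is
the normalizer. Telescoping from `Φ_0 = -log d` to `Φ_K ≤ 0` gives
`-log d ≤ Σ_k (t ⟨g_k, u⟩ + log Z_k)`. On the other hand, since the losses are nonnegative,
`e^{-a} ≤ 1 - a + a²/2` and `log z ≤ z - 1` give `t ⟨g_k, x_k⟩ + log Z_k ≤ (t²/2) Σ_i x_{k,i} g_{k,i}²`.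
Subtracting and dividing by `t` yields the inequality. -/

open Finset Real

theorem Real.exp_neg_le_one_sub_add_sq_div_two {a : ℝ} (ha : 0 ≤ a) :
    exp (-a) ≤ 1 - a + a ^ 2 / 2 := by
  have hexp : 1 + a + a ^ 2 / 2 ≤ exp a := quadratic_le_exp_of_nonneg ha
  -- `(1 - a + a²/2) (1 + a + a²/2) = 1 + a⁴/4 ≥ 1 = e^{-a} e^a`
  have hprod : exp (-a) * exp a = 1 := by rw [← exp_add, neg_add_cancel, exp_zero]
  nlinarith [exp_pos (-a), mul_le_mul_of_nonneg_left hexp (exp_pos (-a)).le, pow_nonneg ha 4]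

section ExpWeights

variable {ι : Type*} [Fintype ι]

/-- The normalizer of the exponential-weights update of `p` by the loss vector `g`. -/
noncomputable def expMoment (t : ℝ) (g p : ι → ℝ) : ℝ := ∑ i, p i * exp (-t * g i)

lemma expMoment_pos [Nonempty ι] (t : ℝ) (g : ι → ℝ) {p : ι → ℝ} (hp : ∀ i, 0 < p i) :
    0 < expMoment t g p :=
  sum_pos (fun i _ => mul_pos (hp i) (exp_pos _)) univ_nonempty

lemma expMoment_le {t : ℝ} (ht : 0 ≤ t) {g p : ι → ℝ} (hg : ∀ i, 0 ≤ g i) (hp : ∀ i, 0 ≤ p i)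
    (hp_sum : ∑ i, p i = 1) :
    expMoment t g p ≤ 1 - t * ∑ i, g i * p i + t ^ 2 / 2 * ∑ i, p i * g i ^ 2 :=
  calc expMoment t g p ≤ ∑ i, p i * (1 - t * g i + (t * g i) ^ 2 / 2) := by
        refine sum_le_sum fun i _ => mul_le_mul_of_nonneg_left ?_ (hp i)
        rw [neg_mul]
        exact exp_neg_le_one_sub_add_sq_div_two (mul_nonneg ht (hg i))
    _ = ∑ i, p i - t * ∑ i, g i * p i + t ^ 2 / 2 * ∑ i, p i * g i ^ 2 := by
        simp only [mul_sum, ← sum_sub_distrib, ← sum_add_distrib]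
        exact sum_congr rfl fun i _ => by ring
    _ = 1 - t * ∑ i, g i * p i + t ^ 2 / 2 * ∑ i, p i * g i ^ 2 := by rw [hp_sum]

lemma mul_sum_add_log_expMoment_le {t : ℝ} (ht : 0 ≤ t) {g p : ι → ℝ} (hg : ∀ i, 0 ≤ g i)
    (hp : ∀ i, 0 ≤ p i) (hp_sum : ∑ i, p i = 1) (hZ : 0 < expMoment t g p) :
    t * ∑ i, g i * p i + log (expMoment t g p) ≤ t ^ 2 / 2 * ∑ i, p i * g i ^ 2 := by
  linarith [log_le_sub_one_of_pos hZ, expMoment_le ht hg hp hp_sum]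

lemma sum_mul_log_expUpdate {t : ℝ} {g p q u : ι → ℝ} (hp : ∀ i, 0 < p i)
    (hZ : 0 < expMoment t g p) (hq : ∀ i, q i = p i * exp (-t * g i) / expMoment t g p)
    (hu_sum : ∑ i, u i = 1) :
    ∑ i, u i * log (q i)
      = ∑ i, u i * log (p i) - (t * ∑ i, g i * u i + log (expMoment t g p)) := by
  have hlog : ∀ i, log (q i) = log (p i) - t * g i - log (expMoment t g p) := fun i => by
    rw [hq, log_div (mul_pos (hp i) (exp_pos _)).ne' hZ.ne',
      log_mul (hp i).ne' (exp_pos _).ne', log_exp]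
    ring
  have hlin : ∑ i, u i * (t * g i) = t * ∑ i, g i * u i := by
    rw [mul_sum]
    exact sum_congr rfl fun i _ => by ring
  simp only [hlog, mul_sub, sum_sub_distrib, ← sum_mul, hu_sum, one_mul, hlin]
  ring

lemma sum_mul_log_nonpos {p u : ι → ℝ} (hp : ∀ i, 0 ≤ p i) (hp_sum : ∑ i, p i = 1)
    (hu : ∀ i, 0 ≤ u i) : ∑ i, u i * log (p i) ≤ 0 :=
  sum_nonpos fun i _ => mul_nonpos_of_nonneg_of_nonpos (hu i) <| log_nonpos (hp i) <|
    hp_sum ▸ single_le_sum (fun j _ => hp j) (mem_univ i)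

variable {t : ℝ} {g x : ℕ → ι → ℝ}
  (hupd : ∀ k i, x (k + 1) i = x k i * exp (-t * g k i) / expMoment t (g k) (x k))
include hupd

lemma expWeights_pos [Nonempty ι] (hx0 : ∀ i, 0 < x 0 i) : ∀ k i, 0 < x k i := by
  intro k
  induction k with
  | zero => exact hx0
  | succ k ih =>
    intro i
    rw [hupd]
    exact div_pos (mul_pos (ih i) (exp_pos _)) (expMoment_pos t (g k) ih)

lemma sum_expWeights_eq_one [Nonempty ι] (hpos : ∀ k i, 0 < x k i) (hx0_sum : ∑ i, x 0 i = 1) :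
    ∀ k, ∑ i, x k i = 1 := by
  intro k
  induction k with
  | zero => exact hx0_sum
  | succ k _ =>
    simp only [hupd, ← sum_div]
    exact div_self (expMoment_pos t (g k) (hpos k)).ne'

lemma sum_mul_log_expWeights_eq [Nonempty ι] (hpos : ∀ k i, 0 < x k i) {u : ι → ℝ}
    (hu_sum : ∑ i, u i = 1) (K : ℕ) :
    ∑ i, u i * log (x K i) = ∑ i, u i * log (x 0 i)
      - ∑ k ∈ range K, (t * ∑ i, g k i * u i + log (expMoment t (g k) (x k))) := by
  induction K with
  | zero => simp
  | succ K ih =>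
    rw [sum_mul_log_expUpdate (hpos K) (expMoment_pos t (g K) (hpos K)) (hupd K) hu_sum, ih,
      sum_range_succ]
    ring

theorem mul_regret_expWeights_le [Nonempty ι] (ht : 0 ≤ t) (hg : ∀ k i, 0 ≤ g k i)
    (hx0 : ∀ i, 0 < x 0 i) (hx0_sum : ∑ i, x 0 i = 1) {u : ι → ℝ} (hu : ∀ i, 0 ≤ u i)
    (hu_sum : ∑ i, u i = 1) (K : ℕ) :
    t * ∑ k ∈ range K, ∑ i, g k i * (x k i - u i)
      ≤ -∑ i, u i * log (x 0 i) + t ^ 2 / 2 * ∑ k ∈ range K, ∑ i, x k i * g k i ^ 2 := by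
  have hpos := expWeights_pos hupd hx0
  have hsum := sum_expWeights_eq_one hupd hpos hx0_sum
  have hstep : ∀ k ∈ range K, t * ∑ i, g k i * x k i + log (expMoment t (g k) (x k))
      ≤ t ^ 2 / 2 * ∑ i, x k i * g k i ^ 2 := fun k _ =>
    mul_sum_add_log_expMoment_le ht (hg k) (fun i => (hpos k i).le) (hsum k)
      (expMoment_pos t (g k) (hpos k))
  have hfinal := sum_mul_log_nonpos (fun i => (hpos K i).le) (hsum K) hu
  rw [sum_mul_log_expWeights_eq hupd hpos hu_sum] at hfinal
  have hsplit : t * ∑ k ∈ range K, ∑ i, g k i * (x k i - u i)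
      = ∑ k ∈ range K, (t * ∑ i, g k i * x k i + log (expMoment t (g k) (x k)))
        - ∑ k ∈ range K, (t * ∑ i, g k i * u i + log (expMoment t (g k) (x k))) := by
    simp only [add_sub_add_right_eq_sub, mul_sum, mul_sub, ← sum_sub_distrib]
  rw [hsplit, mul_sum]
  linarith [sum_le_sum hstep]

end ExpWeights

/-- Fundamental inequality of OMD on the simplex with KL divergence:
with nonnegative losses, uniform initialization and the entropic-mirror update
`x_{k+1,i} = x_{k,i} exp(−t g_{k,i}) / Σ_j x_{k,j} exp(−t g_{k,j})`, for any `u ∈ Δ_d`,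
`Σ_{k<K} ⟨g_k, x_k − u⟩ ≤ (log d)/t + (t/2) Σ_{k<K} Σ_i x_{k,i} g_{k,i}²`. -/
theorem omd_fundamental_inequality
    (d K : ℕ) (hd : 0 < d) (t : ℝ) (ht : 0 < t)
    (g : ℕ → Fin d → ℝ) (hg : ∀ k i, 0 ≤ g k i)
    (x : ℕ → Fin d → ℝ)
    (hx0 : ∀ i, x 0 i = 1 / d)
    (hupd : ∀ k i, x (k + 1) i =
      x k i * Real.exp (-t * g k i) / ∑ j, x k j * Real.exp (-t * g k j))
    (u : Fin d → ℝ) (hu : ∀ i, 0 ≤ u i) (husum : ∑ i, u i = 1) :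
    ∑ k ∈ Finset.range K, ∑ i, g k i * (x k i - u i)
      ≤ Real.log d / t + t / 2 * ∑ k ∈ Finset.range K, ∑ i, x k i * (g k i) ^ 2 := by
  have : Nonempty (Fin d) := Fin.pos_iff_nonempty.mp hd
  have hd' : (0 : ℝ) < d := by exact_mod_cast hd
  have hx0_sum : ∑ i, x 0 i = 1 := by simp [hx0, hd'.ne']
  have hentropy : -∑ i, u i * log (x 0 i) = log d := by
    simp only [hx0, one_div, log_inv, ← sum_mul, husum]
    ring
  have hregret := mul_regret_expWeights_le hupd ht.le hg
    (fun i => by rw [hx0]; positivity) hx0_sum hu husum K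
  rw [hentropy] at hregret
  rw [← mul_le_mul_iff_of_pos_left ht]
  calc _ ≤ _ := hregret
    _ = _ := by field_simp
end

section
/- Dual optimism for CMDPs: Suppose π* is feasible for the constrained problem, i.e., D q^{π*}(p) ≤ α, and λ_k ≥ 0. Suppose the optimistic quantities satisfy c̃_k ≤ c componentwise and the true model p belongs to the confidence set B_k^p. Let (π_k, p̃_k) minimize c̃_k^T q^π(p') + λ_k^T(D̃_k q^π(p') − α) over policies π and p' ∈ B_k^p, with D̃_k ≤ D componentwise. Then, writing f̃_k = c̃_k^T q^{π_k}(p̃_k), g̃_k = D̃_k q^{π_k}(p̃_k) − α, and f_opt = c^T q^{π*}(p): f̃_k − f_opt ≤ −λ_k^T g̃_k. -/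
open Finset

/-- Dual optimism for CMDPs: if `π*` is feasible (`D q^{π*}(p) ≤ α`), `λ_k ≥ 0`,
the optimistic costs satisfy `c̃_k ≤ c` and `D̃_k ≤ D` componentwise, the true model `p` is in
the confidence set `B_k^p`, and `(π_k, p̃_k)` minimizes the optimistic Lagrangian
`c̃_kᵀ q^π(p') + λ_kᵀ(D̃_k q^π(p') − α)` over policies `π` and `p' ∈ B_k^p`, then
`f̃_k − f_opt ≤ −λ_kᵀ g̃_k`, where `f̃_k = c̃_kᵀ q^{π_k}(p̃_k)`,
`g̃_k = D̃_k q^{π_k}(p̃_k) − α` and `f_opt = cᵀ q^{π*}(p)`. -/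
theorem dual_optimism_cmdp
    {Pol Trans ι : Type*} [Fintype ι] {I : ℕ}
    (q : Pol → Trans → ι → ℝ) (hq : ∀ π p x, 0 ≤ q π p x)
    (c ct : ι → ℝ) (D Dt : Fin I → ι → ℝ) (α : Fin I → ℝ)
    (B : Set Trans) (p : Trans) (hpB : p ∈ B)
    (hct : ∀ x, ct x ≤ c x) (hDt : ∀ i x, Dt i x ≤ D i x)
    (lam : Fin I → ℝ) (hlam : ∀ i, 0 ≤ lam i)
    (pstar : Pol) (hfeas : ∀ i, ∑ x, D i x * q pstar p x ≤ α i)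
    (pk : Pol) (ptk : Trans) (hptk : ptk ∈ B)
    (hmin : ∀ π : Pol, ∀ p' ∈ B,
      (∑ x, ct x * q pk ptk x) + ∑ i, lam i * ((∑ x, Dt i x * q pk ptk x) - α i)
        ≤ (∑ x, ct x * q π p' x) + ∑ i, lam i * ((∑ x, Dt i x * q π p' x) - α i)) :
    (∑ x, ct x * q pk ptk x) - (∑ x, c x * q pstar p x)
      ≤ -(∑ i, lam i * ((∑ x, Dt i x * q pk ptk x) - α i)) := by
  have h1 := hmin pstar p hpB
  have h2 : (∑ x, ct x * q pstar p x) ≤ ∑ x, c x * q pstar p x :=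
    Finset.sum_le_sum fun x _ => mul_le_mul_of_nonneg_right (hct x) (hq _ _ _)
  have h3 : (∑ i, lam i * ((∑ x, Dt i x * q pstar p x) - α i)) ≤ 0 := by
    apply Finset.sum_nonpos
    intro i _
    apply mul_nonpos_of_nonneg_of_nonpos (hlam i)
    have : (∑ x, Dt i x * q pstar p x) ≤ ∑ x, D i x * q pstar p x :=
      Finset.sum_le_sum fun x _ => mul_le_mul_of_nonneg_right (hDt i x) (hq _ _ _)
    linarith [hfeas i]
  linarith
end

section
/- Recursive propagation of value-estimation error (Lemma on future differences): Let V_h^π(s) = V_h^π(s; l, p) and Ṽ_h^π(s) = V_h^π(s; l̃, p̄) be the values of a fixed policy π under (l, p) and (l̃, p̄) respectively, and assume the one-step optimism-gap condition l_h(s,a) − l̃_h(s,a) + Σ_{s'} (p_h(s'|s,a) − p̄_h(s'|s,a)) V_{h+1}^π(s') ≥ 0 for all s, a, h. Then Σ_{h=2}^H E[ V_h^π(s_h) − Ṽ_h^π(s_h) | s_1 = s, π, p ] ≤ H ( V_1^π(s) − Ṽ_1^π(s) ) + H Σ_{h=1}^H E[ | Σ_{s'} (p_h(s'|s_h,a_h)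 − p̄_h(s'|s_h,a_h)) (Ṽ_{h+1}^π(s') − V_{h+1}^π(s')) | | s_1 = s, π, p ]. -/
open Finset

/-- Occupancy measure of policy `pi` under kernel `p`, started at stage `h0` in state `s0`. -/
def occFrom {S A : Type*} [Fintype S] [Fintype A] [DecidableEq S]
    (pi : ℕ → S → A → ℝ) (p : ℕ → S → A → S → ℝ) (h0 : ℕ) (s0 : S) :
    ℕ → S → A → ℝ
  | 0 => fun s a => (if s = s0 then (1 : ℝ) else 0) * pi h0 s a
  | n + 1 => fun s a =>
      (∑ s' : S, ∑ a' : A, occFrom pi p h0 s0 n s' a' * p (h0 + n) s' a' s) * pi (h0 + n + 1) s a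

/-- `valFrom pi p l n h s`: value of `pi` under costs `l` and kernel `p` at stage `h` with `n`
steps remaining; `V_h = valFrom pi p l (H - h) h`. -/
def valFrom {S A : Type*} [Fintype S] [Fintype A]
    (pi : ℕ → S → A → ℝ) (p : ℕ → S → A → S → ℝ) (l : ℕ → S → A → ℝ) :
    ℕ → ℕ → S → ℝ
  | 0, _, _ => 0
  | n + 1, h, s =>
      ∑ a : A, pi h s a * (l h s a + ∑ s' : S, p h s a s' * valFrom pi p l n (h + 1) s')


section AuxFD

variable {S A : Type*} [Fintype S] [Fintype A] [DecidableEq S]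

lemma occFrom_nonneg_aux (pi : ℕ → S → A → ℝ) (p : ℕ → S → A → S → ℝ) (s0 : S)
    (hpi : ∀ h x a, 0 ≤ pi h x a) (hp : ∀ h x a s', 0 ≤ p h x a s') :
    ∀ n x a, 0 ≤ occFrom pi p 0 s0 n x a := by
  intro n
  induction n with
  | zero =>
      intro x a
      simp only [occFrom]
      exact mul_nonneg (by split_ifs <;> norm_num) (hpi _ _ _)
  | succ n ih =>
      intro x a
      simp only [occFrom]
      exact mul_nonneg (Finset.sum_nonneg fun s' _ => Finset.sum_nonneg fun a' _ =>
        mul_nonneg (ih s' a') (hp _ _ _ _)) (hpi _ _ _)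

lemma occFrom_factor_aux (pi : ℕ → S → A → ℝ) (p : ℕ → S → A → S → ℝ) (s0 : S)
    (hpi : ∀ h x, ∑ a : A, pi h x a = 1) :
    ∀ n x a, occFrom pi p 0 s0 n x a = (∑ a' : A, occFrom pi p 0 s0 n x a') * pi n x a := by
  intro n x a
  cases n with
  | zero =>
      simp only [occFrom]
      rw [← Finset.mul_sum, hpi]
      ring
  | succ n =>
      simp only [occFrom, Nat.zero_add]
      rw [← Finset.mul_sum, hpi]
      ring

lemma occFrom_mu_succ_aux (pi : ℕ → S → A → ℝ) (p : ℕ → S → A → S → ℝ) (s0 : S)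
    (hpi : ∀ h x, ∑ a : A, pi h x a = 1) (n : ℕ) (x : S) :
    (∑ a : A, occFrom pi p 0 s0 (n + 1) x a)
      = ∑ x' : S, ∑ a' : A, occFrom pi p 0 s0 n x' a' * p n x' a' x := by
  simp only [occFrom, Nat.zero_add]
  rw [← Finset.mul_sum, hpi, mul_one]

end AuxFD

/-- Recursive propagation of value-estimation error: if for all `s, a, h`
`l_h(s,a) − l̃_h(s,a) + Σ_{s'} (p_h − p̄_h)(s'|s,a) V_{h+1}^π(s') ≥ 0`, then
`Σ_{h=2}^H E[V_h^π(s_h) − Ṽ_h^π(s_h) | s_1 = s, π, p]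
 ≤ H(V_1^π(s) − Ṽ_1^π(s))
 + H Σ_{h=1}^H E[|Σ_{s'} (p_h − p̄_h)(s'|s_h,a_h)(Ṽ_{h+1}^π − V_{h+1}^π)(s')| | s_1 = s, π, p]`,
where `V = V(·; l, p)`, `Ṽ = V(·; l̃, p̄)` and expectations are over trajectories of `π`
under the true kernel `p` (expressed via occupancy measures). -/
theorem future_differences_to_initial_difference
    {S A : Type*} [Fintype S] [Fintype A] [DecidableEq S]
    (H : ℕ) (pi : ℕ → S → A → ℝ)
    (p pb : ℕ → S → A → S → ℝ) (l lt : ℕ → S → A → ℝ) (s : S)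
    (hpi : ∀ h x, (∀ a, 0 ≤ pi h x a) ∧ ∑ a : A, pi h x a = 1)
    (hp : ∀ h x a, (∀ s', 0 ≤ p h x a s') ∧ ∑ s' : S, p h x a s' = 1)
    (hpb : ∀ h x a, (∀ s', 0 ≤ pb h x a s') ∧ ∑ s' : S, pb h x a s' = 1)
    (hgap : ∀ h, h < H → ∀ x a,
      0 ≤ l h x a - lt h x a +
        ∑ s' : S, (p h x a s' - pb h x a s') * valFrom pi p l (H - (h + 1)) (h + 1) s') :
    (∑ h ∈ Finset.Ico 1 H, ∑ x : S,
        (∑ a : A, occFrom pi p 0 s h x a) *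
          (valFrom pi p l (H - h) h x - valFrom pi pb lt (H - h) h x))
    ≤ (H : ℝ) * (valFrom pi p l H 0 s - valFrom pi pb lt H 0 s)
      + (H : ℝ) * ∑ h ∈ Finset.range H, ∑ x : S, ∑ a : A,
          occFrom pi p 0 s h x a *
            |∑ s' : S, (p h x a s' - pb h x a s') *
              (valFrom pi pb lt (H - (h + 1)) (h + 1) s' -
                valFrom pi p l (H - (h + 1)) (h + 1) s')| := by
  classical
  have hpinn : ∀ h x a, 0 ≤ pi h x a := fun h x a => (hpi h x).1 a
  have hpisum : ∀ h x, ∑ a : A, pi h x a = 1 := fun h x => (hpi h x).2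
  have hpnn : ∀ h x a s', 0 ≤ p h x a s' := fun h x a => (hp h x a).1
  have honn := occFrom_nonneg_aux pi p s hpinn hpnn
  set occ : ℕ → S → A → ℝ := occFrom pi p 0 s with hocc
  set D : ℕ → S → ℝ := fun h x =>
    valFrom pi p l (H - h) h x - valFrom pi pb lt (H - h) h x with hD
  set ee : ℕ → S → A → ℝ := fun h x a =>
    ∑ s' : S, (p h x a s' - pb h x a s') *
      (valFrom pi pb lt (H - (h + 1)) (h + 1) s' -
        valFrom pi p l (H - (h + 1)) (h + 1) s') with hee
  set gg : ℕ → S → A → ℝ := fun h x a =>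
    l h x a - lt h x a +
      ∑ s' : S, (p h x a s' - pb h x a s') * valFrom pi p l (H - (h + 1)) (h + 1) s' with hgg
  set mu : ℕ → S → ℝ := fun h x => ∑ a : A, occ h x a with hmu
  set E : ℕ → ℝ := fun h => ∑ x : S, mu h x * D h x with hE
  set Ch : ℕ → ℝ := fun h => ∑ x : S, ∑ a : A, occ h x a * (gg h x a + ee h x a) with hCh
  set Ah : ℕ → ℝ := fun h => ∑ x : S, ∑ a : A, occ h x a * |ee h x a| with hAh
  -- pointwise recursion for D
  have hDrec : ∀ h, h < H → ∀ x,
      D h x = ∑ a : A, pi h x a *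
        ((gg h x a + ee h x a) + ∑ s' : S, p h x a s' * D (h + 1) s') := by
    intro h hh x
    have hn : H - h = (H - (h + 1)) + 1 := by omega
    simp only [hD, hee, hgg]
    rw [hn]
    simp only [valFrom]
    rw [← Finset.sum_sub_distrib]
    refine Finset.sum_congr rfl fun a _ => ?_
    rw [← mul_sub]
    congr 1
    simp only [mul_sub, sub_mul, Finset.sum_sub_distrib, Finset.sum_add_distrib]
    ring
  have hfac : ∀ n x a, occ n x a = mu n x * pi n x a := by
    intro n x a
    simp only [hmu, hocc]
    exact occFrom_factor_aux pi p s hpisum n x a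
  -- expectation recursion
  have hErec : ∀ h, h < H → E h = Ch h + E (h + 1) := by
    intro h hh
    simp only [hE, hCh]
    calc ∑ x : S, mu h x * D h x
        = ∑ x : S, ∑ a : A, occ h x a *
            ((gg h x a + ee h x a) + ∑ s' : S, p h x a s' * D (h + 1) s') := by
          refine Finset.sum_congr rfl fun x _ => ?_
          rw [hDrec h hh x, Finset.mul_sum]
          refine Finset.sum_congr rfl fun a _ => ?_
          rw [hfac h x a]
          ring
      _ = (∑ x : S, ∑ a : A, occ h x a * (gg h x a + ee h x a))
          + ∑ x : S, ∑ a : A, ∑ s' : S, occ h x a * (p h x a s' * D (h + 1) s') := by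
          simp only [mul_add, Finset.sum_add_distrib, Finset.mul_sum]
      _ = (∑ x : S, ∑ a : A, occ h x a * (gg h x a + ee h x a)) + ∑ x' : S, mu (h + 1) x' * D (h + 1) x' := by
          congr 1
          calc ∑ x : S, ∑ a : A, ∑ x' : S, occ h x a * (p h x a x' * D (h + 1) x')
              = ∑ x : S, ∑ x' : S, ∑ a : A, occ h x a * (p h x a x' * D (h + 1) x') :=
                Finset.sum_congr rfl fun x _ => Finset.sum_comm
            _ = ∑ x' : S, ∑ x : S, ∑ a : A, occ h x a * (p h x a x' * D (h + 1) x') :=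
                Finset.sum_comm
            _ = ∑ x' : S, mu (h + 1) x' * D (h + 1) x' := by
                refine Finset.sum_congr rfl fun x' _ => ?_
                simp only [hmu, hocc]
                rw [occFrom_mu_succ_aux pi p s hpisum h x', Finset.sum_mul]
                refine Finset.sum_congr rfl fun x _ => ?_
                rw [Finset.sum_mul]
                exact Finset.sum_congr rfl fun a _ => by ring
  -- telescoping
  have htel : ∀ m k, k + m = H → E k = ∑ h ∈ Finset.Ico k H, Ch h := by
    intro m
    induction m with
    | zero =>
        intro k hk
        have hkH : k = H := by omega
        subst hkH
        simp [hE, hD, Nat.sub_self, valFrom]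
    | succ m ih =>
        intro k hk
        have hkH : k < H := by omega
        rw [hErec k hkH, ih (k + 1) (by omega), Finset.sum_eq_sum_Ico_succ_bot hkH]
  have hE0 : E 0 = ∑ h ∈ Finset.range H, Ch h := by
    rw [htel H 0 (by omega), Finset.range_eq_Ico]
  have hAnn : ∀ h, 0 ≤ Ah h := by
    intro h
    simp only [hAh]
    exact Finset.sum_nonneg fun x _ => Finset.sum_nonneg fun a _ =>
      mul_nonneg (honn h x a) (abs_nonneg _)
  have hCge : ∀ h, h < H → -Ah h ≤ Ch h := by
    intro h hh
    have h1 : -Ah h = ∑ x : S, ∑ a : A, occ h x a * (-|ee h x a|) := by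
      simp [hAh, mul_neg, Finset.sum_neg_distrib]
    rw [h1]
    simp only [hCh]
    refine Finset.sum_le_sum fun x _ => Finset.sum_le_sum fun a _ => ?_
    refine mul_le_mul_of_nonneg_left ?_ (honn h x a)
    have hg0 : 0 ≤ gg h x a := by
      simp only [hgg]
      exact hgap h hh x a
    have he0 : -|ee h x a| ≤ ee h x a := neg_abs_le _
    linarith
  have hB : 0 ≤ E 0 + ∑ h ∈ Finset.range H, Ah h := by
    rw [hE0]
    have h2 : ∑ h ∈ Finset.range H, -Ah h ≤ ∑ h ∈ Finset.range H, Ch h :=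
      Finset.sum_le_sum fun h hh => hCge h (Finset.mem_range.mp hh)
    rw [Finset.sum_neg_distrib] at h2
    linarith
  have hEle : ∀ k, 1 ≤ k → k < H → E k ≤ E 0 + ∑ h ∈ Finset.range H, Ah h := by
    intro k h1 h2
    have e0 : E 0 = (∑ h ∈ Finset.Ico 0 k, Ch h) + E k := by
      rw [hE0, htel (H - k) k (by omega), Finset.range_eq_Ico,
        ← Finset.sum_Ico_consecutive Ch (Nat.zero_le k) h2.le]
    have h3 : ∑ h ∈ Finset.Ico 0 k, -Ah h ≤ ∑ h ∈ Finset.Ico 0 k, Ch h :=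
      Finset.sum_le_sum fun h hh => hCge h (by have := Finset.mem_Ico.mp hh; omega)
    rw [Finset.sum_neg_distrib] at h3
    have h4 : ∑ h ∈ Finset.Ico 0 k, Ah h ≤ ∑ h ∈ Finset.range H, Ah h := by
      refine Finset.sum_le_sum_of_subset_of_nonneg ?_ fun h _ _ => hAnn h
      rw [Finset.range_eq_Ico]
      exact Finset.Ico_subset_Ico le_rfl h2.le
    linarith
  -- identify goal with E / Ah
  have hLHS : (∑ h ∈ Finset.Ico 1 H, ∑ x : S,
      (∑ a : A, occ h x a) * (valFrom pi p l (H - h) h x - valFrom pi pb lt (H - h) h x))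
      = ∑ h ∈ Finset.Ico 1 H, E h := by
    refine Finset.sum_congr rfl fun h _ => ?_
    simp only [hE, hmu, hD]
  have hE0s : E 0 = valFrom pi p l H 0 s - valFrom pi pb lt H 0 s := by
    have hx : ∀ x : S, mu 0 x = if x = s then (1:ℝ) else 0 := by
      intro x
      simp only [hmu, hocc, occFrom]
      rw [← Finset.mul_sum, hpisum, mul_one]
    simp only [hE]
    rw [Finset.sum_congr rfl fun x _ => by rw [hx x]]
    simp only [hD, Nat.sub_zero, ite_mul, one_mul, zero_mul]
    rw [Finset.sum_ite_eq' Finset.univ s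
      (fun x => valFrom pi p l H 0 x - valFrom pi pb lt H 0 x)]
    simp
  have hRHS : (∑ h ∈ Finset.range H, ∑ x : S, ∑ a : A,
      occ h x a * |∑ s' : S, (p h x a s' - pb h x a s') *
        (valFrom pi pb lt (H - (h + 1)) (h + 1) s' -
          valFrom pi p l (H - (h + 1)) (h + 1) s')|)
      = ∑ h ∈ Finset.range H, Ah h := by
    refine Finset.sum_congr rfl fun h _ => ?_
    simp only [hAh, hee]
  rw [hLHS, ← hE0s, hRHS]
  have hcard : ∑ h ∈ Finset.Ico 1 H, E h
      ≤ ((H - 1 : ℕ) : ℝ) * (E 0 + ∑ h ∈ Finset.range H, Ah h) := by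
    have h5 := Finset.sum_le_card_nsmul (Finset.Ico 1 H) E
      (E 0 + ∑ h ∈ Finset.range H, Ah h)
      (fun h hh => by
        have hm := Finset.mem_Ico.mp hh
        exact hEle h hm.1 hm.2)
    rw [Nat.card_Ico, nsmul_eq_mul] at h5
    exact h5
  have hcast : ((H - 1 : ℕ) : ℝ) ≤ (H : ℝ) := by
    exact_mod_cast Nat.sub_le H 1
  calc ∑ h ∈ Finset.Ico 1 H, E h
      ≤ ((H - 1 : ℕ) : ℝ) * (E 0 + ∑ h ∈ Finset.range H, Ah h) := hcard
    _ ≤ (H : ℝ) * (E 0 + ∑ h ∈ Finset.range H, Ah h) :=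
        mul_le_mul_of_nonneg_right hcast hB
    _ = (H : ℝ) * E 0 + (H : ℝ) * ∑ h ∈ Finset.range H, Ah h := by ring
end

section
/- Feasibility of near-saddle mixtures implies small max violation: Suppose a Slater point x̄ exists with g(x̄) < 0 and define ρ = (f(x̄) − f_opt)/min_j(−g_j(x̄)). If x̃ ∈ X satisfies f(x̃) − f_opt + ρ ‖[g(x̃)]_+‖_∞ ≤ δ, then max_j [g_j(x̃)]_+ ≤ δ/ρ, where f_opt is the optimal value of min{f(x): g(x) ≤ 0, x ∈ X}. -/
open Finset

/-- Feasibility of near-saddle mixtures implies small max violation: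
suppose a Slater point `x̄ ∈ X` exists with `g(x̄) < 0`, set
`ρ = (f(x̄) − f_opt)/min_j(−g_j(x̄))`, and strong duality holds, witnessed by an optimal
dual solution `λ* ≥ 0` with `f_opt ≤ f(x) + λ*ᵀ g(x)` for all `x ∈ X`. If `x̃ ∈ X`
satisfies (precisely, with projection parameter `2ρ`)
`f(x̃) − f_opt + 2ρ ‖[g(x̃)]_+‖_∞ ≤ δ`, then `max_j [g_j(x̃)]_+ ≤ δ/ρ`. -/
theorem near_saddle_max_violation
    {E : Type*} [AddCommGroup E] [Module ℝ E]
    {ι : Type*} [Fintype ι] [Nonempty ι]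
    (X : Set E) (hX : Convex ℝ X)
    (f : E → ℝ) (g : ι → E → ℝ)
    (hf : ConvexOn ℝ X f) (hg : ∀ j, ConvexOn ℝ X (g j))
    (fopt : ℝ)
    (hfopt : ∀ x ∈ X, (∀ j, g j x ≤ 0) → fopt ≤ f x)
    (xb : E) (hxb : xb ∈ X) (hslater : ∀ j, g j xb < 0)
    (ρ : ℝ) (hρ : 0 < ρ)
    (hρdef : ρ = (f xb - fopt) / (Finset.univ.inf' Finset.univ_nonempty fun j => -(g j xb)))
    (lam : ι → ℝ) (hlam : ∀ j, 0 ≤ lam j)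
    (hdual : ∀ x ∈ X, fopt ≤ f x + ∑ j, lam j * g j x)
    (δ : ℝ) (xt : E) (hxt : xt ∈ X)
    (hnear : f xt - fopt
        + 2 * ρ * (Finset.univ.sup' Finset.univ_nonempty fun j => max (g j xt) 0) ≤ δ) :
    (Finset.univ.sup' Finset.univ_nonempty fun j => max (g j xt) 0) ≤ δ / ρ := by

  set m : ℝ := Finset.univ.inf' Finset.univ_nonempty fun j => -(g j xb) with hm
  have hmpos : 0 < m := by
    rw [hm]
    apply Finset.lt_inf'_iff _ |>.mpr
    intro j _
    linarith [hslater j]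
  have hfxb : f xb - fopt = ρ * m := by
    rw [hρdef]; field_simp
  set V : ℝ := Finset.univ.sup' Finset.univ_nonempty fun j => max (g j xt) 0 with hV
  have hVnn : 0 ≤ V := by
    obtain ⟨j⟩ := ‹Nonempty ι›
    have h := Finset.le_sup' (fun j => max (g j xt) 0) (Finset.mem_univ j)
    simp only [← hV] at h
    exact le_trans (le_max_right _ 0) h
  -- sum of lam ≤ ρ
  have hsum : ∑ j, lam j ≤ ρ := by
    have h1 := hdual xb hxb
    have h2 : ∑ j, lam j * m ≤ ∑ j, lam j * (-(g j xb)) := by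
      apply Finset.sum_le_sum
      intro j _
      exact mul_le_mul_of_nonneg_left (Finset.inf'_le _ (Finset.mem_univ j)) (hlam j)
    have h3 : ∑ j, lam j * (-(g j xb)) ≤ ρ * m := by
      have : ∑ j, lam j * (-(g j xb)) = -(∑ j, lam j * g j xb) := by
        rw [← Finset.sum_neg_distrib]; ring_nf
      rw [this]; linarith [hfxb]
    have h4 : (∑ j, lam j) * m ≤ ρ * m := by
      rw [Finset.sum_mul]; linarith
    exact le_of_mul_le_mul_right h4 hmpos
  have hlow : fopt ≤ f xt + ρ * V := by
    have h1 := hdual xt hxt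
    have h2 : ∑ j, lam j * g j xt ≤ ∑ j, lam j * V := by
      apply Finset.sum_le_sum
      intro j _
      apply mul_le_mul_of_nonneg_left _ (hlam j)
      have h := Finset.le_sup' (fun j => max (g j xt) 0) (Finset.mem_univ j)
      simp only [← hV] at h
      exact le_trans (le_max_left _ 0) h
    have h3 : ∑ j, lam j * V ≤ ρ * V := by
      rw [← Finset.sum_mul]
      exact mul_le_mul_of_nonneg_right hsum hVnn
    linarith
  have : ρ * V ≤ δ := by linarith
  exact (le_div_iff₀ hρ).mpr (by linarith [mul_comm ρ V])
end
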